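/- If A₁, …, A_m are two-sided ideals of a ring L, each possessing local units, then the product A₁ ⋯ A_m equals the intersection A₁ ∩ ⋯ ∩ A_m. -/

import Mathlib

/-- The product of two two-sided ideals: the smallest two-sided ideal
containing all products `a * b` with `a ∈ A`, `b ∈ B`. -/
def tsiMul {L : Type*} [NonUnitalRing L] (A B : TwoSidedIdeal L) : TwoSidedIdeal L :=
  sInf {I : TwoSidedIdeal L | ∀ a ∈ A, ∀ b ∈ B, a * b ∈ I}

/-- A two-sided ideal `A` has local units if every `a ∈ A` admits an idempotent
`u ∈ A` with `u * a = a = a * u`. -/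
def HasLocalUnits {L : Type*} [NonUnitalRing L] (A : TwoSidedIdeal L) : Prop :=
  ∀ a ∈ A, ∃ u ∈ A, u * u = u ∧ u * a = a ∧ a * u = a

/-- The product `A 0 ⋯ A m` of the family `A` of two-sided ideals. -/
def tsiProd {L : Type*} [NonUnitalRing L] {m : ℕ}
    (A : Fin (m + 1) → TwoSidedIdeal L) : TwoSidedIdeal L :=
  (List.ofFn fun i : Fin m => A i.castSucc).foldr tsiMul (A (Fin.last m))

/-! If `x ∈ A ⊓ B` and `u ∈ A` is a local unit for `x`, then `x = u * x` is a product of an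
element of `A` with an element of `B`; hence `A * B = A ⊓ B` as soon as the left factor has
local units, and the general case follows by peeling off the factors one at a time. -/

theorem iInf_fin_succ {α : Type*} [CompleteLattice α] {n : ℕ} (f : Fin (n + 1) → α) :
    ⨅ i, f i = f 0 ⊓ ⨅ j : Fin n, f j.succ :=
  le_antisymm (le_inf (iInf_le _ 0) (le_iInf fun j => iInf_le _ j.succ))
    (le_iInf fun i => Fin.cases inf_le_left (fun j => inf_le_right.trans (iInf_le _ j)) i)

section TwoSidedIdeal

variable {L : Type*} [NonUnitalRing L]

lemma mul_mem_tsiMul {A B : TwoSidedIdeal L} {a b : L} (ha : a ∈ A) (hb : b ∈ B) :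
    a * b ∈ tsiMul A B :=
  (TwoSidedIdeal.mem_sInf L).2 fun _ hI => hI a ha b hb

lemma tsiMul_le_inf (A B : TwoSidedIdeal L) : tsiMul A B ≤ A ⊓ B :=
  sInf_le fun a ha b hb =>
    (TwoSidedIdeal.mem_inf L).2 ⟨A.mul_mem_right a b ha, B.mul_mem_left a b hb⟩

lemma tsiMul_eq_inf {A : TwoSidedIdeal L} (hA : HasLocalUnits A) (B : TwoSidedIdeal L) :
    tsiMul A B = A ⊓ B := by
  refine le_antisymm (tsiMul_le_inf A B) fun x hx => ?_
  obtain ⟨hxA, hxB⟩ := (TwoSidedIdeal.mem_inf L).1 hx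
  obtain ⟨u, hu, -, hux, -⟩ := hA x hxA
  exact hux ▸ mul_mem_tsiMul hu hxB

lemma tsiProd_succ {m : ℕ} (A : Fin (m + 2) → TwoSidedIdeal L) :
    tsiProd A = tsiMul (A 0) (tsiProd fun j => A j.succ) := by
  simp only [tsiProd, List.ofFn_succ, List.foldr_cons, Fin.succ_castSucc, Fin.succ_last,
    Fin.castSucc_zero]

end TwoSidedIdeal

theorem prod_eq_inf_of_local_units {L : Type*} [NonUnitalRing L]
    (m : ℕ) (A : Fin (m + 1) → TwoSidedIdeal L)
    (hA : ∀ i, HasLocalUnits (A i)) :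
    tsiProd A = ⨅ i, A i := by
  induction m with
  | zero => exact (iInf_unique (ι := Fin 1) A).symm
  | succ n ih =>
    rw [tsiProd_succ, tsiMul_eq_inf (hA 0), ih _ fun j => hA j.succ]
    exact (iInf_fin_succ A).symm
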